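/- arXiv:1011.6121 — 5 statements merged into one kernel-verified Lean document; each statement's English description precedes it below -/
import Mathlib

section
/- Let W ∈ ℂ^{M×M} be Hermitian positive semidefinite and h ∈ ℂ^M with Π_W h ≠ 0. Then the normalized vectors (I + tW)^{-1} h / ‖(I + tW)^{-1} h‖ converge, as the real parameter t → ∞, to Π_W h / ‖Π_W h‖. In particular the limit is a unit vector lying in ker(W). -/
/-!
The resolvent `(1 + tW)⁻¹` is the functional calculus of `x ↦ (1 + tx)⁻¹` at `W`. On the
spectrum of `W`, a finite subset of `[0, ∞)`, these functions converge as `t → ∞` to the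
indicator function of `{0}`, whose functional calculus is the orthogonal projection onto
`ker W`. Hence `(1 + tW)⁻¹ h → Π_W h`, and normalizing is continuous away from `0`.
-/

open Matrix Filter
open scoped ComplexOrder

noncomputable def euclNorm {M : ℕ} (v : Fin M → ℂ) : ℝ :=
  Real.sqrt (∑ i, ‖v i‖ ^ 2)

open scoped MatrixOrder Topology

namespace Matrix

section KerProjection

variable {n 𝕜 : Type*} [RCLike 𝕜] [Fintype n]

def IsKerProjection (A P : Matrix n n 𝕜) : Prop :=
  (∀ x, A *ᵥ (P *ᵥ x) = 0) ∧ ∀ x y, A *ᵥ y = 0 → star y ⬝ᵥ (x - P *ᵥ x) = 0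

lemma IsKerProjection.mulVec_eq {A P Q : Matrix n n 𝕜} (hP : IsKerProjection A P)
    (hQ : IsKerProjection A Q) (x : n → 𝕜) : P *ᵥ x = Q *ᵥ x := by
  set v := P *ᵥ x - Q *ᵥ x
  have hv : A *ᵥ v = 0 := by rw [mulVec_sub, hP.1, hQ.1, sub_self]
  have hvv : star v ⬝ᵥ v = 0 :=
    calc star v ⬝ᵥ v = star v ⬝ᵥ (x - Q *ᵥ x) - star v ⬝ᵥ (x - P *ᵥ x) := by
          rw [← dotProduct_sub, sub_sub_sub_cancel_left]
      _ = 0 := by rw [hP.2 x v hv, hQ.2 x v hv, sub_self]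
  exact sub_eq_zero.mp (dotProduct_star_self_eq_zero.mp hvv)

end KerProjection

section FunctionalCalculus

variable {n 𝕜 : Type*} [RCLike 𝕜] [Fintype n] [DecidableEq n] {A : Matrix n n 𝕜}

-- Registered with `fun_prop` so that it discharges the continuity side conditions of `cfc`.
@[fun_prop]
lemma continuousOn_spectrum_real (A : Matrix n n 𝕜) (f : ℝ → ℝ) :
    ContinuousOn f (spectrum ℝ A) :=
  A.finite_real_spectrum.continuousOn f

lemma tendsto_cfc_of_tendsto_on_spectrum {X : Type*} {l : Filter X} {F : X → ℝ → ℝ}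
    {f : ℝ → ℝ} (hF : ∀ x ∈ spectrum ℝ A, Tendsto (F · x) l (𝓝 (f x))) :
    Tendsto (fun t => cfc (F t) A) l (𝓝 (cfc f A)) := by
  refine tendsto_cfc_fun (Metric.tendstoUniformlyOn_iff.2 fun ε hε => ?_)
    (.of_forall fun _ => by fun_prop)
  exact A.finite_real_spectrum.eventually_all.2 fun x hx =>
    (Metric.tendsto_nhds.1 (hF x hx) ε hε).mono fun _ h => by rwa [dist_comm]

-- `1 - x⁻¹ * x` is the indicator function of `{0}`, because `0⁻¹ = 0` in `ℝ`.
noncomputable def kerProj (A : Matrix n n 𝕜) : Matrix n n 𝕜 :=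
  cfc (fun x : ℝ => 1 - x⁻¹ * x) A

lemma IsHermitian.kerProj_eq (hA : A.IsHermitian) :
    kerProj A = 1 - cfc (·⁻¹ : ℝ → ℝ) A * A := by
  rw [kerProj, cfc_sub _ _ A, cfc_const_one ℝ A, cfc_mul _ _ A, cfc_id' ℝ A]

lemma IsHermitian.mul_kerProj (hA : A.IsHermitian) : A * kerProj A = 0 :=
  calc A * kerProj A = cfc (fun x : ℝ => x * (1 - x⁻¹ * x)) A := by
        rw [cfc_mul _ _ A, cfc_id' ℝ A, kerProj]
    _ = 0 := by simp [mul_sub, ← mul_assoc, mul_inv_mul_cancel]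

lemma IsHermitian.kerProj_mulVec_of_mulVec_eq_zero (hA : A.IsHermitian) {y : n → 𝕜}
    (hy : A *ᵥ y = 0) : kerProj A *ᵥ y = y := by
  rw [hA.kerProj_eq, sub_mulVec, ← mulVec_mulVec, hy, mulVec_zero, one_mulVec, sub_zero]

lemma IsHermitian.isKerProjection_kerProj (hA : A.IsHermitian) :
    IsKerProjection A (kerProj A) := by
  refine ⟨fun x => by rw [mulVec_mulVec, hA.mul_kerProj, zero_mulVec], fun x y hy => ?_⟩
  have hself : (kerProj A)ᴴ = kerProj A := (cfc_predicate _ A : IsSelfAdjoint (kerProj A))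
  rw [dotProduct_sub, dotProduct_mulVec, ← hself, ← star_mulVec,
    hA.kerProj_mulVec_of_mulVec_eq_zero hy, sub_self]

lemma PosSemidef.nonneg_of_mem_spectrum (hA : A.PosSemidef) {x : ℝ} (hx : x ∈ spectrum ℝ A) :
    0 ≤ x :=
  spectrum_nonneg_of_nonneg (nonneg_iff_posSemidef.2 hA) hx

lemma PosSemidef.one_add_smul_inv_eq_cfc (hA : A.PosSemidef) {t : ℝ} (ht : 0 ≤ t) :
    (1 + t • A)⁻¹ = cfc (fun x : ℝ => (1 + t * x)⁻¹) A := by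
  have hA' : IsSelfAdjoint A := hA.isHermitian
  have hpos : ∀ x ∈ spectrum ℝ A, 1 + t * x ≠ 0 := fun x hx => by
    nlinarith [hA.nonneg_of_mem_spectrum hx]
  apply inv_eq_right_inv
  calc (1 + t • A) * cfc (fun x : ℝ => (1 + t * x)⁻¹) A
      = cfc (fun x : ℝ => (1 + t * x) * (1 + t * x)⁻¹) A := by
        rw [cfc_mul _ _ A (A.continuousOn_spectrum_real _) (A.continuousOn_spectrum_real _),
          cfc_add (a := A) (fun _ => 1) (t * ·), cfc_const_one ℝ A hA', cfc_const_mul _ _ A,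
          cfc_id' ℝ A hA']
    _ = cfc (fun _ : ℝ => 1) A := cfc_congr fun x hx => mul_inv_cancel₀ (hpos x hx)
    _ = 1 := cfc_const_one ℝ A hA'

lemma PosSemidef.tendsto_one_add_smul_inv (hA : A.PosSemidef) :
    Tendsto (fun t : ℝ => (1 + t • A)⁻¹) atTop (𝓝 (kerProj A)) := by
  have hcfc : (fun t : ℝ => cfc (fun x : ℝ => (1 + t * x)⁻¹) A) =ᶠ[atTop]
      fun t => (1 + t • A)⁻¹ :=
    (eventually_ge_atTop 0).mono fun t ht => (hA.one_add_smul_inv_eq_cfc ht).symm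
  refine (tendsto_cfc_of_tendsto_on_spectrum fun x hx => ?_).congr' hcfc
  rcases (hA.nonneg_of_mem_spectrum hx).eq_or_lt with rfl | hx0
  · simp
  · rw [inv_mul_cancel₀ hx0.ne', sub_self]
    exact tendsto_inv_atTop_zero.comp
      (tendsto_atTop_add_const_left _ _ (tendsto_id.atTop_mul_const hx0))

end FunctionalCalculus

end Matrix

section EuclNorm

variable {M : ℕ}

lemma euclNorm_eq_norm (v : Fin M → ℂ) : euclNorm v = ‖WithLp.toLp 2 v‖ := by
  simp [euclNorm, EuclideanSpace.norm_eq]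

lemma continuous_euclNorm : Continuous (euclNorm (M := M)) := by
  simp only [funext euclNorm_eq_norm]
  fun_prop

lemma euclNorm_ne_zero {v : Fin M → ℂ} (hv : v ≠ 0) : euclNorm v ≠ 0 := by
  simpa [euclNorm_eq_norm] using hv

lemma euclNorm_inv_smul_self {v : Fin M → ℂ} (hv : v ≠ 0) :
    euclNorm ((euclNorm v)⁻¹ • v) = 1 := by
  have hv' := euclNorm_ne_zero hv
  simp only [euclNorm_eq_norm] at hv' ⊢
  rw [WithLp.toLp_smul, norm_smul, norm_inv, norm_norm, inv_mul_cancel₀ hv']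

lemma Filter.Tendsto.euclNorm_inv_smul {X : Type*} {l : Filter X} {f : X → Fin M → ℂ}
    {v : Fin M → ℂ} (hf : Tendsto f l (𝓝 v)) (hv : v ≠ 0) :
    Tendsto (fun x => (euclNorm (f x))⁻¹ • f x) l (𝓝 ((euclNorm v)⁻¹ • v)) :=
  (((continuous_euclNorm.tendsto v).comp hf).inv₀ (euclNorm_ne_zero hv)).smul hf

end EuclNorm

/-- For Hermitian positive semidefinite `W` and `h` with `Π_W h ≠ 0`, the normalized
vectors `(I + tW)⁻¹ h / ‖(I + tW)⁻¹ h‖` converge as `t → ∞` to `Π_W h / ‖Π_W h‖`,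
which is a unit vector in `ker W`.  Here `P` is the matrix of the orthogonal projection
onto `ker W`, characterized by `P x ∈ ker W` and `x - P x ⟂ ker W` for all `x`. -/
theorem normalized_whitened_filter_tendsto
    {M : ℕ} (W : Matrix (Fin M) (Fin M) ℂ) (hW : W.PosSemidef)
    (P : Matrix (Fin M) (Fin M) ℂ)
    (hP1 : ∀ x : Fin M → ℂ, W.mulVec (P.mulVec x) = 0)
    (hP2 : ∀ x y : Fin M → ℂ, W.mulVec y = 0 → star y ⬝ᵥ (x - P.mulVec x) = 0)
    (h : Fin M → ℂ) (hph : P.mulVec h ≠ 0) :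
    Tendsto
      (fun t : ℝ =>
        (euclNorm ((1 + (t : ℂ) • W)⁻¹.mulVec h))⁻¹ • ((1 + (t : ℂ) • W)⁻¹.mulVec h))
      atTop (nhds ((euclNorm (P.mulVec h))⁻¹ • P.mulVec h)) ∧
    euclNorm ((euclNorm (P.mulVec h))⁻¹ • P.mulVec h) = 1 ∧
    W.mulVec ((euclNorm (P.mulVec h))⁻¹ • P.mulVec h) = 0 := by
  have hlim : Tendsto (fun t : ℝ => (1 + (t : ℂ) • W)⁻¹ *ᵥ h) atTop (𝓝 (P *ᵥ h)) := by
    rw [IsKerProjection.mulVec_eq ⟨hP1, hP2⟩ hW.isHermitian.isKerProjection_kerProj]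
    simp_rw [Complex.coe_smul]
    exact ((continuous_id.matrix_mulVec continuous_const).tendsto _).comp
      hW.tendsto_one_add_smul_inv
  refine ⟨hlim.euclNorm_inv_smul hph, euclNorm_inv_smul_self hph, ?_⟩
  rw [mulVec_smul, hP1, smul_zero]
end

section
/- Let W ∈ ℂ^{M×M} be Hermitian positive semidefinite and let X ∈ ℂ^{M×N} be a matrix each of whose columns lies in the column space of W. Then (I + tW)^{-1} X → 0 as the real parameter t → ∞. -/
/-!
Write `X = W * Y`. Diagonalising `W = U diag(λ) Uᴴ` gives
`(1 + t W)⁻¹ W = U diag(λᵢ / (1 + t λᵢ)) Uᴴ`,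
and each `λᵢ / (1 + t λᵢ) → 0` because `λᵢ ≥ 0`.
-/

open Matrix Filter Topology Unitary
open scoped ComplexOrder Ring

theorem map_ringInverse {F R S : Type*} [MonoidWithZero R] [MonoidWithZero S] [EquivLike F R S]
    [MulEquivClass F R S] (f : F) (a : R) : f a⁻¹ʳ = (f a)⁻¹ʳ := by
  by_cases ha : IsUnit a
  · obtain ⟨u, rfl⟩ := ha
    rw [Ring.inverse_unit]
    exact (Ring.inverse_unit (Units.map (f : R →* S) u)).symm
  · rw [Ring.inverse_non_unit _ ha, Ring.inverse_non_unit _ (by rwa [MulEquiv.isUnit_map]),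
      map_zero]

theorem Real.tendsto_div_one_add_mul_atTop {c : ℝ} (hc : 0 ≤ c) :
    Tendsto (fun t : ℝ => c / (1 + t * c)) atTop (𝓝 0) := by
  rcases hc.eq_or_lt with rfl | hc
  · simp
  · exact tendsto_const_nhds.div_atTop
      (tendsto_atTop_add_const_left _ _ (tendsto_id.atTop_mul_const hc))

namespace Matrix

theorem exists_mul_eq_of_forall_col_mem_range {m n p R : Type*} [Fintype n] [CommSemiring R]
    {A : Matrix m n R} {X : Matrix m p R}
    (hX : ∀ j, (fun i => X i j) ∈ LinearMap.range A.mulVecLin) :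
    ∃ Y : Matrix n p R, A * Y = X := by
  choose y hy using hX
  exact ⟨of fun i j => y j i, ext fun i j => congrFun (hy j) i⟩

variable {n 𝕜 : Type*} [Fintype n] [DecidableEq n] [RCLike 𝕜] {A : Matrix n n 𝕜}

theorem inv_diagonal_of_forall_ne_zero {K : Type*} [Field K] {v : n → K} (hv : ∀ i, v i ≠ 0) :
    (diagonal v)⁻¹ = diagonal v⁻¹ :=
  inv_eq_left_inv <| by
    rw [diagonal_mul_diagonal, ← diagonal_one]
    exact congrArg diagonal (funext fun i => inv_mul_cancel₀ (hv i))

theorem IsHermitian.inv_one_add_smul_mul_self (hA : A.IsHermitian) {t : ℝ}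
    (ht : ∀ i, 1 + t * hA.eigenvalues i ≠ 0) :
    (1 + (t : 𝕜) • A)⁻¹ * A = conjStarAlgAut 𝕜 _ hA.eigenvectorUnitary
      (diagonal fun i => ((hA.eigenvalues i / (1 + t * hA.eigenvalues i) : ℝ) : 𝕜)) := by
  conv_lhs => rw [hA.spectral_theorem]
  rw [← map_one (conjStarAlgAut 𝕜 _ hA.eigenvectorUnitary), ← map_smul, ← map_add,
    nonsing_inv_eq_ringInverse, ← map_ringInverse, ← nonsing_inv_eq_ringInverse, ← map_mul,
    ← diagonal_one, ← diagonal_smul, diagonal_add, inv_diagonal_of_forall_ne_zero,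
    diagonal_mul_diagonal]
  · congr 2 with i
    simp [div_eq_inv_mul]
  · intro i
    simp only [Pi.smul_apply, Function.comp_apply, smul_eq_mul]
    exact_mod_cast ht i

theorem PosSemidef.tendsto_inv_one_add_smul_mul_self (hA : A.PosSemidef) :
    Tendsto (fun t : ℝ => (1 + (t : 𝕜) • A)⁻¹ * A) atTop (𝓝 0) := by
  have hdiag : Tendsto (fun t : ℝ => diagonal fun i =>
      ((hA.1.eigenvalues i / (1 + t * hA.1.eigenvalues i) : ℝ) : 𝕜)) atTop (𝓝 0) := by
    have hcont : Continuous (diagonal : (n → 𝕜) → Matrix n n 𝕜) :=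
      continuous_id.matrix_diagonal
    rw [← diagonal_zero]
    refine (hcont.tendsto _).comp (tendsto_pi_nhds.2 fun i => ?_)
    simpa [Function.comp_def] using ((RCLike.continuous_ofReal (K := 𝕜)).tendsto 0).comp
      (Real.tendsto_div_one_add_mul_atTop (hA.eigenvalues_nonneg i))
  have hconj := ((hdiag.const_mul (hA.1.eigenvectorUnitary : Matrix n n 𝕜)).mul_const
    (star (hA.1.eigenvectorUnitary : Matrix n n 𝕜)))
  rw [mul_zero, zero_mul] at hconj
  refine hconj.congr' ?_
  filter_upwards [eventually_ge_atTop 0] with t ht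
  rw [hA.1.inv_one_add_smul_mul_self fun i => (add_pos_of_pos_of_nonneg one_pos
    (mul_nonneg ht (hA.eigenvalues_nonneg i))).ne', conjStarAlgAut_apply]

end Matrix

/-- For Hermitian positive semidefinite `W` and a matrix `X` all of whose columns lie
in the column space of `W`, `(I + tW)⁻¹ X → 0` as `t → ∞`. -/
theorem inv_one_add_smul_mul_tendsto_zero
    {M N : ℕ} (W : Matrix (Fin M) (Fin M) ℂ) (hW : W.PosSemidef)
    (X : Matrix (Fin M) (Fin N) ℂ)
    (hX : ∀ j : Fin N, (fun i => X i j) ∈ LinearMap.range W.mulVecLin) :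
    Tendsto (fun t : ℝ => (1 + (t : ℂ) • W)⁻¹ * X) atTop (nhds 0) := by
  obtain ⟨Y, rfl⟩ := exists_mul_eq_of_forall_col_mem_range hX
  have hmul : Continuous fun B : Matrix (Fin M) (Fin M) ℂ => B * Y :=
    continuous_id.matrix_mul continuous_const
  simpa [Function.comp_def, Matrix.mul_assoc] using
    (hmul.tendsto 0).comp hW.tendsto_inv_one_add_smul_mul_self
end

section
/- Let M = 2d. Let H_{lj} ∈ ℂ^{M×M} be channel matrices and V_j ∈ ℂ^{M×d} transmit beamforming matrices, and let U_l ∈ ℂ^{M×d} have rank d with U_l^H H_{lj} V_j = 0 for all j ≠ l. Set Z̃_l = Σ_{j≠l} H_{lj} V_j V_j^H H_{lj}^H and assume rank(Z̃_l) = d. Then for every k ≠ l, (I + t Z̃_l)^{-1} H_{lk} V_k → 0 as the real parameter t → ∞. -/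
/-!
Write `R_t = (1 + t Z)⁻¹`, a Hermitian matrix. The resolvent identity `t Z R_t = 1 - R_t` gives
`t • R_t Z R_t = R_t - R_t²`, whose trace is at most `M / 4` because `r - r² ≤ 1 / 4`.
If `B Bᴴ ≤ Z` in the Loewner order, then
`‖R_t B‖_F² = tr (R_t B Bᴴ R_t) ≤ tr (R_t Z R_t) ≤ M / (4 t) → 0`.
For `B = H_{lk} V_k` with `k ≠ l`, `B Bᴴ` is one of the summands of `Z̃_l`.
-/

open Matrix Filter
open scoped ComplexOrder Topology

namespace Matrix

theorem inv_one_add_mul_mul_inv_one_add {n α : Type*} [Fintype n] [DecidableEq n] [CommRing α]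
    {A : Matrix n n α} (hA : IsUnit (1 + A)) :
    (1 + A)⁻¹ * A * (1 + A)⁻¹ = (1 + A)⁻¹ - (1 + A)⁻¹ * (1 + A)⁻¹ := by
  have hres : A * (1 + A)⁻¹ = 1 - (1 + A)⁻¹ := by
    rw [eq_sub_iff_add_eq, ← add_one_mul, add_comm,
      mul_nonsing_inv _ ((isUnit_iff_isUnit_det _).mp hA)]
  rw [Matrix.mul_assoc, hres, Matrix.mul_sub, Matrix.mul_one]

variable {𝕜 : Type*} [RCLike 𝕜] {m n : Type*} [Fintype m] [Fintype n]

theorem re_trace_sub_mul_self_le [DecidableEq n] {R : Matrix n n 𝕜} (hR : R.IsHermitian) :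
    RCLike.re (R - R * R).trace ≤ Fintype.card n / 4 := by
  have hsq : 4 • (R - R * R) = 1 - (2 * R - 1) * (2 * R - 1)ᴴ := by
    rw [conjTranspose_sub, conjTranspose_mul, hR.eq, conjTranspose_one, conjTranspose_ofNat]
    noncomm_ring
  have hS := RCLike.nonneg_iff.mp (posSemidef_self_mul_conjTranspose (2 * R - 1)).trace_nonneg
  have htrace := congrArg (fun X => RCLike.re (trace X)) hsq
  rw [trace_smul, map_nsmul, nsmul_eq_mul, trace_sub 1, trace_one, map_sub,
    RCLike.natCast_re] at htrace
  push_cast at htrace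
  linarith

section Frobenius

attribute [local instance] frobeniusNormedAddCommGroup

theorem frobenius_norm_sq_eq_re_trace_mul_conjTranspose (A : Matrix n m 𝕜) :
    ‖A‖ ^ 2 = RCLike.re (A * Aᴴ).trace := by
  rw [frobenius_norm_def, ← Real.rpow_natCast, ← Real.rpow_mul (by positivity)]
  simp [trace, mul_apply, RCLike.mul_conj]

variable [DecidableEq n]

theorem frobenius_norm_inv_one_add_smul_mul_sq_le {Z : Matrix n n 𝕜} {B : Matrix n m 𝕜}
    (hB : (Z - B * Bᴴ).PosSemidef) {t : ℝ} (ht : 0 < t) :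
    ‖(1 + t • Z)⁻¹ * B‖ ^ 2 ≤ Fintype.card n / (4 * t) := by
  have hZ : Z.PosSemidef := by simpa using hB.add (posSemidef_self_mul_conjTranspose B)
  have hposDef : (1 + t • Z).PosDef := PosDef.one.add_posSemidef (hZ.smul ht.le)
  set R := (1 + t • Z)⁻¹
  have hR : R.IsHermitian := hposDef.isHermitian.inv
  have hle : RCLike.re (R * B * (R * B)ᴴ).trace ≤ RCLike.re (R * Z * R).trace := by
    have hconj := RCLike.nonneg_iff.mp (hB.mul_mul_conjTranspose_same R).trace_nonneg
    rw [hR.eq, Matrix.mul_sub, Matrix.sub_mul, trace_sub, map_sub] at hconj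
    simp only [conjTranspose_mul, hR.eq, Matrix.mul_assoc] at hconj ⊢
    linarith [hconj.1]
  have hRZR : t • (R * Z * R) = R - R * R := by
    rw [← inv_one_add_mul_mul_inv_one_add hposDef.isUnit, Matrix.mul_smul, Matrix.smul_mul]
  have htrace := re_trace_sub_mul_self_le hR
  rw [← hRZR, trace_smul, RCLike.real_smul_eq_coe_smul (K := 𝕜), smul_eq_mul,
    RCLike.re_ofReal_mul] at htrace
  rw [frobenius_norm_sq_eq_re_trace_mul_conjTranspose, le_div_iff₀ (by positivity)]
  nlinarith

theorem tendsto_inv_one_add_smul_mul_atTop {Z : Matrix n n 𝕜} {B : Matrix n m 𝕜}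
    (hB : (Z - B * Bᴴ).PosSemidef) :
    Tendsto (fun t : ℝ => (1 + t • Z)⁻¹ * B) atTop (𝓝 0) := by
  refine tendsto_zero_iff_norm_tendsto_zero.mpr ?_
  have hbound : Tendsto (fun t : ℝ => √(Fintype.card n / (4 * t))) atTop (𝓝 0) := by
    simpa using ((tendsto_const_nhds (x := (Fintype.card n : ℝ))).div_atTop
      (tendsto_id.const_mul_atTop four_pos)).sqrt
  refine squeeze_zero' (.of_forall fun _ => norm_nonneg _) ?_ hbound
  filter_upwards [eventually_gt_atTop 0] with t ht
  exact Real.le_sqrt_of_sq_le (frobenius_norm_inv_one_add_smul_mul_sq_le hB ht)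

end Frobenius

end Matrix

theorem whitened_interference_tendsto_zero_general
    {K d : ℕ}
    (H : Fin K → Fin K → Matrix (Fin (2 * d)) (Fin (2 * d)) ℂ)
    (V : Fin K → Matrix (Fin (2 * d)) (Fin d) ℂ)
    (l : Fin K)
    (Z : Matrix (Fin (2 * d)) (Fin (2 * d)) ℂ)
    (hZ : Z = ∑ j ∈ Finset.univ.filter (· ≠ l), H l j * V j * (V j)ᴴ * (H l j)ᴴ) :
    ∀ k : Fin K, k ≠ l →
      Tendsto (fun t : ℝ => (1 + (t : ℂ) • Z)⁻¹ * (H l k * V k)) atTop (nhds 0) := by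
  intro k hk
  have hZ_sum : Z = ∑ j ∈ Finset.univ.filter (· ≠ l), (H l j * V j) * (H l j * V j)ᴴ := by
    simp only [hZ, conjTranspose_mul, Matrix.mul_assoc]
  have hB : (Z - H l k * V k * (H l k * V k)ᴴ).PosSemidef := by
    rw [hZ_sum, ← Finset.add_sum_erase _ _ (by simpa using hk), add_sub_cancel_left]
    exact posSemidef_sum _ fun j _ => posSemidef_self_mul_conjTranspose _
  simpa only [Complex.coe_smul] using tendsto_inv_one_add_smul_mul_atTop hB

/-- Let `M = 2d`.  Under interference alignment at receiver `l` with full-rank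
interference covariance `Z̃_l = Σ_{j≠l} H_{lj} V_j V_jᴴ H_{lj}ᴴ` of rank `d`,
the whitening filter kills the interference at high SNR:
`(I + t Z̃_l)⁻¹ H_{lk} V_k → 0` as `t → ∞`, for every `k ≠ l`. -/
theorem whitened_interference_tendsto_zero
    {K d : ℕ}
    (H : Fin K → Fin K → Matrix (Fin (2 * d)) (Fin (2 * d)) ℂ)
    (V U : Fin K → Matrix (Fin (2 * d)) (Fin d) ℂ)
    (l : Fin K)
    (hUrank : (U l).rank = d)
    (hIA : ∀ j : Fin K, j ≠ l → (U l)ᴴ * H l j * V j = 0)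
    (Z : Matrix (Fin (2 * d)) (Fin (2 * d)) ℂ)
    (hZ : Z = ∑ j ∈ Finset.univ.filter (· ≠ l), H l j * V j * (V j)ᴴ * (H l j)ᴴ)
    (hZrank : Z.rank = d) :
    ∀ k : Fin K, k ≠ l →
      Tendsto (fun t : ℝ => (1 + (t : ℂ) • Z)⁻¹ * (H l k * V k)) atTop (nhds 0) :=
  whitened_interference_tendsto_zero_general H V l Z hZ
end

section
/- (Degrees-of-freedom dichotomy for a single stream.) Let W ∈ ℂ^{M×M} be Hermitian positive semidefinite and h ∈ ℂ^M be nonzero. Define the stream rate C(t) = log(1 + t · h^H (I + tW)^{-1} h) for t > 0, where h^H (I + tW)^{-1} h is a nonnegative real. If Π_W h ≠ 0 (nonzero component in the interference-free subspace), then C(t) / log t → 1 as t → ∞. If instead Π_W h = 0 (the signal direction is fully contained in the interference subspace), then C(t) is bounded above on [1, ∞), and consequently C(t) / log t → 0 as t → ∞. -/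
/-!
Let `R t = (1 + t • W)⁻¹`, so that `0 ≤ R t ≤ 1` and `C t = log (1 + t · hᴴ (R t) h)`.
If `k = P h ≠ 0`, then `R t` fixes `k ∈ ker W` and `h - k ⟂ ker W`, so
`|k|² ≤ hᴴ (R t) h ≤ |h|²`: `C t` is squeezed between `log (1 + t |k|²)` and `log (1 + t |h|²)`,
both asymptotic to `log t`.
If `P h = 0`, then `h ⟂ ker W`, which for Hermitian `W` makes `h = W g` for some `g`, and
`t · hᴴ (R t) h = gᴴ (W - W (R t)) g ≤ gᴴ W g` keeps `C t` bounded.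
-/

open Matrix Filter Topology
open scoped ComplexOrder

namespace Matrix
variable {n : Type*} [Fintype n]

theorem IsHermitian.dotProduct_mulVec_add_of_mulVec_eq_self {R : Type*} [CommRing R] [StarRing R]
    {A : Matrix n n R} (hA : A.IsHermitian) {k y : n → R} (hAk : A *ᵥ k = k) (hky : star k ⬝ᵥ y = 0) :
    star (k + y) ⬝ᵥ (A *ᵥ (k + y)) = star k ⬝ᵥ k + star y ⬝ᵥ (A *ᵥ y) := by
  have hkA : star k ᵥ* A = star k := by
    rw [← hA.eq, ← star_mulVec, hAk]
  have hyk : star y ⬝ᵥ k = 0 := by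
    rw [star_dotProduct, hky, star_zero]
  rw [star_add, mulVec_add, add_dotProduct, dotProduct_add, dotProduct_add, hAk,
    dotProduct_mulVec, hkA, hky, hyk]
  ring

variable {𝕜 : Type*} [RCLike 𝕜] [DecidableEq n]

theorem IsHermitian.exists_mulVec_eq_of_orthogonal_ker {W : Matrix n n 𝕜} (hW : W.IsHermitian)
    {x : n → 𝕜} (hx : ∀ y, W *ᵥ y = 0 → star y ⬝ᵥ x = 0) : ∃ g, W *ᵥ g = x := by
  have hmem : WithLp.toLp 2 x ∈ (LinearMap.ker W.toEuclideanLin)ᗮ := by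
    intro y hy
    rw [EuclideanSpace.inner_eq_star_dotProduct, dotProduct_comm]
    exact hx _ (congrArg WithLp.ofLp hy)
  rw [LinearMap.orthogonal_ker, ← toEuclideanLin_conjTranspose_eq_adjoint, hW.eq] at hmem
  obtain ⟨g, hg⟩ := hmem
  exact ⟨g.ofLp, congrArg WithLp.ofLp hg⟩

namespace PosSemidef
variable {W : Matrix n n 𝕜} {t : ℝ}

omit [Fintype n] in
theorem posDef_one_add_smul (hW : W.PosSemidef) (ht : 0 ≤ t) : (1 + t • W).PosDef :=
  PosDef.one.add_posSemidef (hW.smul ht)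

theorem inv_one_add_smul_mul_cancel (hW : W.PosSemidef) (ht : 0 ≤ t) :
    (1 + t • W)⁻¹ * (1 + t • W) = 1 :=
  nonsing_inv_mul _ ((isUnit_iff_isUnit_det _).1 (hW.posDef_one_add_smul ht).isUnit)

theorem one_add_smul_mul_inv_cancel (hW : W.PosSemidef) (ht : 0 ≤ t) :
    (1 + t • W) * (1 + t • W)⁻¹ = 1 :=
  mul_nonsing_inv _ ((isUnit_iff_isUnit_det _).1 (hW.posDef_one_add_smul ht).isUnit)

theorem mul_inv_one_add_smul_comm (hW : W.PosSemidef) (ht : 0 ≤ t) :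
    W * (1 + t • W)⁻¹ = (1 + t • W)⁻¹ * W := by
  set R := (1 + t • W)⁻¹
  have hWB : W * (1 + t • W) = (1 + t • W) * W := by
    simp only [mul_add, add_mul, mul_one, one_mul, mul_smul_comm, smul_mul_assoc]
  calc W * R = R * (1 + t • W) * W * R := by rw [hW.inv_one_add_smul_mul_cancel ht, one_mul]
    _ = R * (W * (1 + t • W)) * R := by rw [hWB]; simp only [Matrix.mul_assoc]
    _ = R * W := by
      rw [Matrix.mul_assoc, Matrix.mul_assoc, hW.one_add_smul_mul_inv_cancel ht, mul_one]

theorem one_sub_inv_one_add_smul (hW : W.PosSemidef) (ht : 0 ≤ t) :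
    1 - (1 + t • W)⁻¹ = t • ((1 + t • W)⁻¹ * W) := by
  calc 1 - (1 + t • W)⁻¹ = (1 + t • W)⁻¹ * (1 + t • W) - (1 + t • W)⁻¹ := by
        rw [hW.inv_one_add_smul_mul_cancel ht]
    _ = t • ((1 + t • W)⁻¹ * W) := by rw [mul_add, mul_one, mul_smul_comm, add_sub_cancel_left]

theorem inv_one_add_smul_mul_posSemidef (hW : W.PosSemidef) (ht : 0 ≤ t) :
    ((1 + t • W)⁻¹ * W).PosSemidef := by
  set R := (1 + t • W)⁻¹
  have hR : Rᴴ = R := (hW.posDef_one_add_smul ht).inv.isHermitian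
  have hRW : R * W = Rᴴ * (W + t • (Wᴴ * W)) * R := by
    rw [hR, hW.isHermitian.eq]
    calc R * W = R * W * ((1 + t • W) * R) := by rw [hW.one_add_smul_mul_inv_cancel ht, mul_one]
      _ = R * (W + t • (W * W)) * R := by
        simp only [Matrix.mul_assoc, mul_add, add_mul, one_mul, mul_smul_comm, smul_mul_assoc]
  rw [hRW]
  exact (hW.add ((posSemidef_conjTranspose_mul_self W).smul ht)).conjTranspose_mul_mul_same R

theorem inv_one_add_smul_mulVec_of_mulVec_eq_zero (hW : W.PosSemidef) (ht : 0 ≤ t)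
    {k : n → 𝕜} (hk : W *ᵥ k = 0) : (1 + t • W)⁻¹ *ᵥ k = k := by
  have hBk : (1 + t • W) *ᵥ k = k := by
    rw [add_mulVec, one_mulVec, smul_mulVec, hk, smul_zero, add_zero]
  conv_lhs => rw [← hBk, mulVec_mulVec, hW.inv_one_add_smul_mul_cancel ht, one_mulVec]

theorem dotProduct_inv_one_add_smul_mulVec_nonneg (hW : W.PosSemidef) (ht : 0 ≤ t)
    (x : n → 𝕜) : 0 ≤ star x ⬝ᵥ ((1 + t • W)⁻¹ *ᵥ x) :=
  (hW.posDef_one_add_smul ht).inv.posSemidef.dotProduct_mulVec_nonneg x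

theorem dotProduct_inv_one_add_smul_mulVec_le (hW : W.PosSemidef) (ht : 0 ≤ t)
    (x : n → 𝕜) : star x ⬝ᵥ ((1 + t • W)⁻¹ *ᵥ x) ≤ star x ⬝ᵥ x := by
  have h := ((hW.inv_one_add_smul_mul_posSemidef ht).smul ht).dotProduct_mulVec_nonneg x
  rwa [← hW.one_sub_inv_one_add_smul ht, sub_mulVec, one_mulVec, dotProduct_sub,
    sub_nonneg] at h

theorem dotProduct_le_dotProduct_inv_one_add_smul_mulVec (hW : W.PosSemidef) (ht : 0 ≤ t)
    {x k : n → 𝕜} (hk : W *ᵥ k = 0) (hxk : star k ⬝ᵥ (x - k) = 0) :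
    star k ⬝ᵥ k ≤ star x ⬝ᵥ ((1 + t • W)⁻¹ *ᵥ x) := by
  obtain ⟨y, rfl⟩ : ∃ y, x = k + y := ⟨x - k, (add_sub_cancel k x).symm⟩
  rw [add_sub_cancel_left] at hxk
  rw [(hW.posDef_one_add_smul ht).inv.isHermitian.dotProduct_mulVec_add_of_mulVec_eq_self
    (hW.inv_one_add_smul_mulVec_of_mulVec_eq_zero ht hk) hxk, le_add_iff_nonneg_right]
  exact hW.dotProduct_inv_one_add_smul_mulVec_nonneg ht y

theorem smul_dotProduct_inv_one_add_smul_mulVec_mulVec_le (hW : W.PosSemidef) (ht : 0 ≤ t)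
    (g : n → 𝕜) :
    t • (star (W *ᵥ g) ⬝ᵥ ((1 + t • W)⁻¹ *ᵥ (W *ᵥ g))) ≤ star g ⬝ᵥ (W *ᵥ g) := by
  have hWRW : t • (W * (1 + t • W)⁻¹ * W) = W - W * (1 + t • W)⁻¹ := by
    rw [Matrix.mul_assoc, ← mul_smul_comm, ← hW.one_sub_inv_one_add_smul ht, mul_sub, mul_one]
  have h := (hW.mul_inv_one_add_smul_comm ht ▸
    hW.inv_one_add_smul_mul_posSemidef ht).dotProduct_mulVec_nonneg g
  rw [star_mulVec, hW.isHermitian.eq, ← dotProduct_mulVec, mulVec_mulVec, mulVec_mulVec,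
    ← dotProduct_smul, ← smul_mulVec, hWRW, sub_mulVec, dotProduct_sub]
  exact sub_le_self _ h

end PosSemidef

end Matrix

namespace Real

theorem tendsto_log_one_add_mul_div_log {a : ℝ} (ha : 0 < a) :
    Tendsto (fun t => log (1 + t * a) / log t) atTop (𝓝 1) := by
  have hlog : Tendsto (fun t => log (t⁻¹ + a)) atTop (𝓝 (log (0 + a))) :=
    (tendsto_inv_atTop_zero.add_const a).log (by positivity)
  have hlim := (hlog.div_atTop tendsto_log_atTop).const_add 1
  rw [add_zero] at hlim
  refine hlim.congr' ?_
  filter_upwards [eventually_gt_atTop 1] with t ht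
  have ht0 : 0 < t := one_pos.trans ht
  rw [show 1 + t * a = t * (t⁻¹ + a) by field_simp, log_mul ht0.ne' (by positivity),
    add_div, div_self (log_pos ht).ne']

theorem tendsto_log_one_add_mul_div_log_of_mem_Icc {a b : ℝ} {q : ℝ → ℝ} (ha : 0 < a)
    (hq : ∀ᶠ t in atTop, q t ∈ Set.Icc a b) :
    Tendsto (fun t => log (1 + t * q t) / log t) atTop (𝓝 1) := by
  obtain ⟨_, hab⟩ := hq.exists
  refine tendsto_of_tendsto_of_tendsto_of_le_of_le' (tendsto_log_one_add_mul_div_log ha)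
    (tendsto_log_one_add_mul_div_log (ha.trans_le (hab.1.trans hab.2))) ?_ ?_
  · filter_upwards [hq, eventually_gt_atTop 1] with t hqt ht
    have : 0 < t := one_pos.trans ht
    gcongr
    exacts [log_nonneg ht.le, hqt.1]
  · filter_upwards [hq, eventually_gt_atTop 1] with t hqt ht
    have : 0 < t := one_pos.trans ht
    have : 0 < q t := ha.trans_le hqt.1
    gcongr
    exacts [log_nonneg ht.le, hqt.2]

theorem tendsto_div_log_of_mem_Icc {f : ℝ → ℝ} {B : ℝ} (hf : ∀ᶠ t in atTop, f t ∈ Set.Icc 0 B) :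
    Tendsto (fun t => f t / log t) atTop (𝓝 0) := by
  refine squeeze_zero' ?_ ?_ (tendsto_const_nhds (x := B) |>.div_atTop tendsto_log_atTop)
  · filter_upwards [hf, eventually_gt_atTop 1] with t hft ht
    exact div_nonneg hft.1 (log_nonneg ht.le)
  · filter_upwards [hf, eventually_gt_atTop 1] with t hft ht
    exact div_le_div_of_nonneg_right hft.2 (log_nonneg ht.le)

end Real

theorem dof_dichotomy_single_stream_general
    {M : ℕ} (W : Matrix (Fin M) (Fin M) ℂ) (hW : W.PosSemidef)
    (h : Fin M → ℂ)
    (P : Matrix (Fin M) (Fin M) ℂ)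
    (hP1 : ∀ x : Fin M → ℂ, W.mulVec (P.mulVec x) = 0)
    (hP2 : ∀ x y : Fin M → ℂ, W.mulVec y = 0 → star y ⬝ᵥ (x - P.mulVec x) = 0)
    (C : ℝ → ℝ)
    (hC : ∀ t : ℝ, 0 < t →
      C t = Real.log (1 + t * (star h ⬝ᵥ ((1 + (t : ℂ) • W)⁻¹.mulVec h)).re)) :
    (P.mulVec h ≠ 0 →
      Tendsto (fun t : ℝ => C t / Real.log t) atTop (nhds 1)) ∧
    (P.mulVec h = 0 →
      (∃ B : ℝ, ∀ t : ℝ, 1 ≤ t → C t ≤ B) ∧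
      Tendsto (fun t : ℝ => C t / Real.log t) atTop (nhds 0)) := by
  simp only [Complex.coe_smul] at hC
  constructor
  · intro hPh
    refine (Real.tendsto_log_one_add_mul_div_log_of_mem_Icc
      (q := fun t => (star h ⬝ᵥ ((1 + t • W)⁻¹ *ᵥ h)).re) (b := (star h ⬝ᵥ h).re)
      (Complex.pos_iff.1 (dotProduct_star_self_pos_iff.2 hPh)).1 ?_).congr' ?_
    · filter_upwards [eventually_ge_atTop 0] with t ht
      exact ⟨Complex.re_le_re (hW.dotProduct_le_dotProduct_inv_one_add_smul_mulVec ht (hP1 h)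
        (hP2 h _ (hP1 h))), Complex.re_le_re (hW.dotProduct_inv_one_add_smul_mulVec_le ht h)⟩
    · filter_upwards [eventually_gt_atTop 0] with t ht
      rw [hC t ht]
  · intro hPh
    obtain ⟨g, rfl⟩ := hW.isHermitian.exists_mulVec_eq_of_orthogonal_ker (x := h) fun y hy => by
      simpa [hPh] using hP2 h y hy
    set β := (star g ⬝ᵥ (W *ᵥ g)).re
    have hC_mem : ∀ t, 1 ≤ t → C t ∈ Set.Icc 0 (Real.log (1 + β)) := by
      intro t ht
      have ht0 : 0 < t := one_pos.trans_le ht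
      have hq := Complex.re_le_re (hW.dotProduct_inv_one_add_smul_mulVec_nonneg ht0.le (W *ᵥ g))
      have htq := Complex.re_le_re (hW.smul_dotProduct_inv_one_add_smul_mulVec_mulVec_le ht0.le g)
      rw [Complex.zero_re] at hq
      rw [Complex.smul_re, smul_eq_mul] at htq
      have := mul_nonneg ht0.le hq
      rw [hC t ht0]
      exact ⟨Real.log_nonneg (by linarith), Real.log_le_log (by linarith) (by linarith)⟩
    exact ⟨⟨_, fun t ht => (hC_mem t ht).2⟩,
      Real.tendsto_div_log_of_mem_Icc ((eventually_ge_atTop 1).mono hC_mem)⟩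

/-- Degrees-of-freedom dichotomy for a single stream.  With
`C(t) = log(1 + t · hᴴ (I + tW)⁻¹ h)`: if `Π_W h ≠ 0` then `C(t)/log t → 1`; if
`Π_W h = 0` then `C(t)` is bounded above on `[1, ∞)` and `C(t)/log t → 0`.
Here `P` is the matrix of the orthogonal projection onto `ker W`, characterized by
`P x ∈ ker W` and `x - P x ⟂ ker W` for all `x`. -/
theorem dof_dichotomy_single_stream
    {M : ℕ} (W : Matrix (Fin M) (Fin M) ℂ) (hW : W.PosSemidef)
    (h : Fin M → ℂ) (hh : h ≠ 0)
    (P : Matrix (Fin M) (Fin M) ℂ)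
    (hP1 : ∀ x : Fin M → ℂ, W.mulVec (P.mulVec x) = 0)
    (hP2 : ∀ x y : Fin M → ℂ, W.mulVec y = 0 → star y ⬝ᵥ (x - P.mulVec x) = 0)
    (C : ℝ → ℝ)
    (hC : ∀ t : ℝ, 0 < t →
      C t = Real.log (1 + t * (star h ⬝ᵥ ((1 + (t : ℂ) • W)⁻¹.mulVec h)).re)) :
    (P.mulVec h ≠ 0 →
      Tendsto (fun t : ℝ => C t / Real.log t) atTop (nhds 1)) ∧
    (P.mulVec h = 0 →
      (∃ B : ℝ, ∀ t : ℝ, 1 ≤ t → C t ≤ B) ∧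
      Tendsto (fun t : ℝ => C t / Real.log t) atTop (nhds 0)) :=
  dof_dichotomy_single_stream_general W hW h P hP1 hP2 C hC
end

section
/- Let B ∈ ℂ^{M×M} be Hermitian positive semidefinite and let A ∈ ℂ^{M×N} be a matrix each of whose columns lies in the column space of B. Then t (I + tB)^{-1} A → B^† A as the real parameter t → ∞, where B^† is the Moore–Penrose pseudoinverse of B. -/
open Matrix Filter Topology
open scoped ComplexOrder

/-!
Write `A = B C`. Since `t (1 + tB)⁻¹ B = 1 - (1 + tB)⁻¹`, we get `t (1 + tB)⁻¹ A = (1 - R_t) C`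
with `R_t = (1 + tB)⁻¹`, so it suffices that `R_t → 1 - B† B`. Now `R_t` fixes `1 - B† B`
(because `B (1 - B† B) = 0`), while on `B† B = B B†ᴴ` it acts as `t⁻¹ (1 - R_t) B†ᴴ`. Positivity
of `B` gives `‖R_t‖ ≤ 1` in the operator norm, so `R_t - (1 - B† B) = O(t⁻¹)`.
-/

section Algebra

variable {𝕜 A : Type*} [Field 𝕜] [Ring A] [Algebra 𝕜 A] {t : 𝕜} {r b : A}

theorem smul_mul_eq_one_sub_of_mul_one_add_smul_eq_one (hr : r * (1 + t • b) = 1) :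
    t • (r * b) = 1 - r := by
  rw [← hr, mul_add, mul_one, mul_smul_comm]
  abel

theorem sub_one_sub_mul_eq_inv_smul (ht : t ≠ 0) (hr : r * (1 + t • b) = 1) {b' x : A}
    (hb : b * b' * b = b) (hx : b' * b = b * x) :
    r - (1 - b' * b) = t⁻¹ • (x - r * x) := by
  have hker : r * (1 - b' * b) = 1 - b' * b := by
    have h : (1 + t • b) * (1 - b' * b) = 1 - b' * b := by
      rw [add_mul, one_mul, smul_mul_assoc, mul_sub, mul_one, ← mul_assoc, hb, sub_self,
        smul_zero, add_zero]
    calc r * (1 - b' * b) = r * (1 + t • b) * (1 - b' * b) := by rw [mul_assoc, h]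
      _ = 1 - b' * b := by rw [hr, one_mul]
  calc r - (1 - b' * b) = r * b * x := by rw [← hker, mul_sub, mul_one, sub_sub_cancel, hx,
        mul_assoc]
    _ = t⁻¹ • (x - r * x) := by
      rw [← inv_smul_smul₀ ht (r * b), smul_mul_eq_one_sub_of_mul_one_add_smul_eq_one hr,
        smul_mul_assoc, sub_mul, one_mul]

end Algebra

theorem norm_le_norm_add_of_re_inner_nonneg {𝕜 E : Type*} [RCLike 𝕜] [NormedAddCommGroup E]
    [InnerProductSpace 𝕜 E] {x y : E} (h : 0 ≤ RCLike.re (inner 𝕜 x y)) : ‖x‖ ≤ ‖x + y‖ := by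
  have hsq : ‖x‖ ^ 2 ≤ ‖x‖ * ‖x + y‖ :=
    calc ‖x‖ ^ 2 ≤ RCLike.re (inner 𝕜 x (x + y)) := by
          rw [inner_add_right, map_add, inner_self_eq_norm_sq]
          linarith
      _ ≤ ‖x‖ * ‖x + y‖ := re_inner_le_norm x (x + y)
  nlinarith [norm_nonneg x, norm_nonneg (x + y)]

theorem Matrix.exists_mul_eq_of_forall_col_mem_range_s16 {R m n p : Type*} [CommSemiring R]
    [Fintype n] {B : Matrix m n R} {A : Matrix m p R}
    (hA : ∀ j, (fun i => A i j) ∈ LinearMap.range B.mulVecLin) :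
    ∃ C : Matrix n p R, B * C = A := by
  choose c hc using hA
  exact ⟨of fun i j => c j i, ext fun i j => congrFun (hc j) i⟩

namespace Matrix.PosSemidef

variable {𝕜 n : Type*} [RCLike 𝕜] {B : Matrix n n 𝕜}

theorem ofReal_smul (hB : B.PosSemidef) {t : ℝ} (ht : 0 ≤ t) : ((t : 𝕜) • B).PosSemidef :=
  hB.smul (RCLike.ofReal_nonneg.mpr ht)

variable [Fintype n] [DecidableEq n]

theorem isUnit_det_one_add (hB : B.PosSemidef) : IsUnit (1 + B).det :=
  (isUnit_iff_isUnit_det _).mp (PosDef.one.add_posSemidef hB).isUnit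

open scoped Matrix.Norms.L2Operator

theorem l2_opNorm_inv_one_add_le_one (hB : B.PosSemidef) : ‖(1 + B)⁻¹‖ ≤ 1 := by
  rw [← l2_opNorm_toEuclideanCLM]
  refine ContinuousLinearMap.opNorm_le_bound _ zero_le_one fun x => ?_
  set y := toEuclideanCLM (n := n) (𝕜 := 𝕜) (1 + B)⁻¹ x
  have hx : toEuclideanCLM (n := n) (𝕜 := 𝕜) (1 + B) y = x := by
    rw [← mul_apply_eq_comp, ← map_mul, mul_nonsing_inv _ hB.isUnit_det_one_add, map_one,
      one_apply_eq_self]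
  have hpos := (isPositive_toEuclideanLin_iff.mpr hB).re_inner_nonneg_right y
  calc ‖y‖ ≤ ‖y + toEuclideanLin B y‖ := norm_le_norm_add_of_re_inner_nonneg hpos
    _ = 1 * ‖x‖ := by
      rw [← hx, one_mul, map_add, map_one, _root_.add_apply, one_apply_eq_self]
      rfl

theorem tendsto_inv_one_add_smul (hB : B.PosSemidef) {B' : Matrix n n 𝕜}
    (h1 : B * B' * B = B) (h4 : (B' * B)ᴴ = B' * B) :
    Tendsto (fun t : ℝ => (1 + (t : 𝕜) • B)⁻¹) atTop (𝓝 (1 - B' * B)) := by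
  have hx : B' * B = B * B'ᴴ := by rw [← h4, conjTranspose_mul, hB.1.eq]
  rw [tendsto_iff_norm_sub_tendsto_zero]
  refine squeeze_zero' (Eventually.of_forall fun _ => norm_nonneg _) ?_
    ((tendsto_inv_atTop_zero.mul_const (2 * ‖B'ᴴ‖)).trans (by rw [zero_mul]))
  filter_upwards [eventually_gt_atTop 0] with t ht
  set R := (1 + (t : 𝕜) • B)⁻¹
  have hR : ‖R‖ ≤ 1 := (hB.ofReal_smul ht.le).l2_opNorm_inv_one_add_le_one
  rw [sub_one_sub_mul_eq_inv_smul (RCLike.ofReal_ne_zero.mpr ht.ne')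
      (nonsing_inv_mul _ (hB.ofReal_smul ht.le).isUnit_det_one_add) h1 hx,
    norm_smul, norm_inv, RCLike.norm_ofReal, abs_of_pos ht]
  gcongr
  calc ‖B'ᴴ - R * B'ᴴ‖ ≤ ‖B'ᴴ‖ + ‖R‖ * ‖B'ᴴ‖ :=
        (norm_sub_le _ _).trans (by gcongr; exact norm_mul_le _ _)
    _ ≤ 2 * ‖B'ᴴ‖ := by nlinarith [norm_nonneg B'ᴴ]

end Matrix.PosSemidef

theorem smul_inv_one_add_smul_mul_tendsto_pinv_general
    {M N : ℕ} (B : Matrix (Fin M) (Fin M) ℂ) (hB : B.PosSemidef)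
    (A : Matrix (Fin M) (Fin N) ℂ)
    (hA : ∀ j : Fin N, (fun i => A i j) ∈ LinearMap.range B.mulVecLin)
    (Bdag : Matrix (Fin M) (Fin M) ℂ)
    (hMP1 : B * Bdag * B = B)
    (hMP4 : (Bdag * B)ᴴ = Bdag * B) :
    Tendsto (fun t : ℝ => (t : ℂ) • ((1 + (t : ℂ) • B)⁻¹ * A)) atTop
      (nhds (Bdag * A)) := by
  obtain ⟨C, rfl⟩ := exists_mul_eq_of_forall_col_mem_range_s16 hA
  have hinv : Tendsto (fun t : ℝ => (1 + (t : ℂ) • B)⁻¹) atTop (𝓝 (1 - Bdag * B)) :=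
    hB.tendsto_inv_one_add_smul hMP1 hMP4
  have hlim : Tendsto (fun t : ℝ => (1 - (1 + (t : ℂ) • B)⁻¹) * C) atTop
      (𝓝 ((1 - (1 - Bdag * B)) * C)) :=
    ((continuous_id.matrix_mul continuous_const).tendsto _).comp (tendsto_const_nhds.sub hinv)
  rw [sub_sub_cancel, Matrix.mul_assoc] at hlim
  refine hlim.congr' (eventually_ge_atTop 0 |>.mono fun t ht => ?_)
  have hunit : IsUnit (1 + (t : ℂ) • B).det := (hB.ofReal_smul (𝕜 := ℂ) ht).isUnit_det_one_add
  dsimp only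
  rw [← Matrix.mul_assoc, ← Matrix.smul_mul,
    smul_mul_eq_one_sub_of_mul_one_add_smul_eq_one (nonsing_inv_mul _ hunit)]

/-- For Hermitian positive semidefinite `B` and a matrix `A` whose columns all lie in
the column space of `B`, `t (I + tB)⁻¹ A → B† A` as `t → ∞`, where `B†` (here `Bdag`)
is the Moore–Penrose pseudoinverse of `B`, characterized by the four Penrose
conditions: `B B† B = B`, `B† B B† = B†`, `(B B†)ᴴ = B B†`, `(B† B)ᴴ = B† B`. -/
theorem smul_inv_one_add_smul_mul_tendsto_pinv
    {M N : ℕ} (B : Matrix (Fin M) (Fin M) ℂ) (hB : B.PosSemidef)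
    (A : Matrix (Fin M) (Fin N) ℂ)
    (hA : ∀ j : Fin N, (fun i => A i j) ∈ LinearMap.range B.mulVecLin)
    (Bdag : Matrix (Fin M) (Fin M) ℂ)
    (hMP1 : B * Bdag * B = B) (hMP2 : Bdag * B * Bdag = Bdag)
    (hMP3 : (B * Bdag)ᴴ = B * Bdag) (hMP4 : (Bdag * B)ᴴ = Bdag * B) :
    Tendsto (fun t : ℝ => (t : ℂ) • ((1 + (t : ℂ) • B)⁻¹ * A)) atTop
      (nhds (Bdag * A)) :=
  smul_inv_one_add_smul_mul_tendsto_pinv_general B hB A hA Bdag hMP1 hMP4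
end
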